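/- arXiv:1207.3619 — 2 statements merged into one kernel-verified Lean document; each statement's English description precedes it below -/
import Mathlib

section
/- For every integer N ≥ 1, the Hausdorff dimension of the metric space (ℝ^N × ℝ, d), where d is the parabolic metric, equals N + 2. -/
open scoped ENNReal

noncomputable section

/-- Spacetime `ℝ^N × ℝ` equipped with the parabolic metric
`d((x,t),(y,s)) = max (‖x-y‖, |t-s|^{1/2})`. -/
def ParSpace (N : ℕ) : Type := EuclideanSpace ℝ (Fin N) × ℝ

namespace ParSpace

variable {N : ℕ}

theorem sqrt_subadd (a b : ℝ) (ha : 0 ≤ a) (hb : 0 ≤ b) :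
    Real.sqrt (a + b) ≤ Real.sqrt a + Real.sqrt b := by
  have h1 := Real.sq_sqrt ha
  have h2 := Real.sq_sqrt hb
  have h3 := Real.sqrt_nonneg a
  have h4 := Real.sqrt_nonneg b
  rw [show a + b = (Real.sqrt a)^2 + (Real.sqrt b)^2 by rw [h1, h2]]
  have h : (Real.sqrt a)^2 + (Real.sqrt b)^2 ≤ (Real.sqrt a + Real.sqrt b)^2 := by nlinarith
  calc Real.sqrt ((Real.sqrt a)^2 + (Real.sqrt b)^2)
      ≤ Real.sqrt ((Real.sqrt a + Real.sqrt b)^2) := Real.sqrt_le_sqrt h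
    _ = Real.sqrt a + Real.sqrt b := Real.sqrt_sq (by positivity)

instance : MetricSpace (ParSpace N) where
  dist X Y := max ‖X.1 - Y.1‖ (Real.sqrt |X.2 - Y.2|)
  dist_self X := by
    show max ‖X.1 - X.1‖ (Real.sqrt |X.2 - X.2|) = 0
    simp
  dist_comm X Y := by
    show max ‖X.1 - Y.1‖ (Real.sqrt |X.2 - Y.2|) = max ‖Y.1 - X.1‖ (Real.sqrt |Y.2 - X.2|)
    rw [norm_sub_rev, abs_sub_comm]
  dist_triangle X Y Z := by
    show max ‖X.1 - Z.1‖ (Real.sqrt |X.2 - Z.2|) ≤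
      max ‖X.1 - Y.1‖ (Real.sqrt |X.2 - Y.2|) + max ‖Y.1 - Z.1‖ (Real.sqrt |Y.2 - Z.2|)
    apply max_le
    · calc ‖X.1 - Z.1‖ ≤ ‖X.1 - Y.1‖ + ‖Y.1 - Z.1‖ := norm_sub_le_norm_sub_add_norm_sub _ _ _
        _ ≤ _ := add_le_add (le_max_left _ _) (le_max_left _ _)
    · calc Real.sqrt |X.2 - Z.2|
          ≤ Real.sqrt (|X.2 - Y.2| + |Y.2 - Z.2|) :=
            Real.sqrt_le_sqrt (abs_sub_le _ _ _)
        _ ≤ Real.sqrt |X.2 - Y.2| + Real.sqrt |Y.2 - Z.2| :=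
            sqrt_subadd _ _ (abs_nonneg _) (abs_nonneg _)
        _ ≤ _ := add_le_add (le_max_right _ _) (le_max_right _ _)
  eq_of_dist_eq_zero := by
    intro X Y h
    have h' : max ‖X.1 - Y.1‖ (Real.sqrt |X.2 - Y.2|) = 0 := h
    have h1 : ‖X.1 - Y.1‖ = 0 := le_antisymm (h' ▸ le_max_left _ _) (norm_nonneg _)
    have h2 : Real.sqrt |X.2 - Y.2| = 0 :=
      le_antisymm (h' ▸ le_max_right _ _) (Real.sqrt_nonneg _)
    have hx : X.1 = Y.1 := sub_eq_zero.mp (norm_eq_zero.mp h1)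
    have ht : X.2 = Y.2 := by
      have := (Real.sqrt_eq_zero (abs_nonneg _)).mp h2
      exact sub_eq_zero.mp (abs_eq_zero.mp this)
    exact Prod.ext hx ht

instance : MeasurableSpace (ParSpace N) := borel _
instance : BorelSpace (ParSpace N) := ⟨rfl⟩

/-- The spacetime origin. -/
def origin (N : ℕ) : ParSpace N := ((0 : EuclideanSpace ℝ (Fin N)), (0 : ℝ))

end ParSpace
end

open MeasureTheory

/-!
Lebesgue measure on `ℝ^N × ℝ` is Ahlfors regular of dimension `N + 2` for the parabolic metric:
the parabolic ball of radius `r` is a Euclidean ball of radius `r` times a time interval of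
length `2 r²`, so its measure is `c r^(N+2)`. A set of diameter `r` lies in such a ball, so
`volume ≤ c • μH[N+2]` and `dimH ≥ N + 2`. Conversely, the `ε`-balls around a `2ε`-separated
subset of a ball of radius `R` are disjoint and lie in the ball of radius `R + 1`, so there are
at most `((R + 1) / ε)^(N+2)` of them; a maximal such set is a `2ε`-cover, so the ball has finite
`μH[N+2]`.
-/
open scoped NNReal
open Metric Set Filter Topology

theorem packingNumber_two_mul_mul_le_measure_biUnion {X : Type*} [PseudoEMetricSpace X]
    [MeasurableSpace X] [OpensMeasurableSpace X] {μ : Measure X} {A : Set X} {ε : ℝ≥0} {m : ℝ≥0∞}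
    (hm : ∀ x ∈ A, m ≤ μ (closedEBall x ε)) :
    (packingNumber (2 * ε) A : ℝ≥0∞) * m ≤ μ (⋃ x ∈ A, closedEBall x ε) := by
  simp only [packingNumber, ENat.toENNReal_iSup, ENNReal.iSup_mul, iSup_le_iff]
  intro C hCA hC
  have hdisj : Pairwise (Function.onFun Disjoint fun x : C => closedEBall (x : X) ε) := by
    intro x y hxy
    refine Set.disjoint_left.2 fun z hzx hzy =>
      (hC x.2 y.2 (Subtype.coe_injective.ne hxy)).not_ge ?_
    calc edist (x : X) y ≤ edist (x : X) z + edist z y := edist_triangle _ _ _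
      _ ≤ ε + ε := add_le_add (edist_comm z (x : X) ▸ hzx) hzy
      _ = ((2 * ε : ℝ≥0) : ℝ≥0∞) := by push_cast; ring
  calc (C.encard : ℝ≥0∞) * m = ∑' _ : C, m := (ENNReal.tsum_set_const C m).symm
    _ ≤ ∑' x : C, μ (closedEBall x ε) := ENNReal.tsum_le_tsum fun x => hm x (hCA x.2)
    _ ≤ μ (⋃ x : C, closedEBall x ε) :=
      tsum_meas_le_meas_iUnion_of_disjoint μ (fun _ => isClosed_closedEBall.measurableSet) hdisj
    _ ≤ μ (⋃ x ∈ A, closedEBall x ε) := measure_mono <|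
      iUnion_subset fun x => subset_biUnion_of_mem (u := fun y => closedEBall y ε) (hCA x.2)

section AhlforsRegular

variable {X : Type*} [EMetricSpace X] [MeasurableSpace X] [BorelSpace X] {μ : Measure X}
  {c : ℝ≥0∞}

theorem inv_smul_le_hausdorffMeasure {d : ℝ}
    (h : ∀ x (r : ℝ≥0), μ (closedEBall x r) ≤ c * r ^ d) : c⁻¹ • μ ≤ μH[d] := by
  refine Measure.le_hausdorffMeasure d _ 1 one_pos fun s hs => ?_
  rcases s.eq_empty_or_nonempty with rfl | ⟨x, hx⟩
  · simp
  lift ediam s to ℝ≥0 using (hs.trans_lt ENNReal.one_lt_top).ne with r hr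
  have hsub : s ⊆ closedEBall x r := fun y hy => hr ▸ edist_le_ediam_of_mem hy hx
  calc c⁻¹ * μ s ≤ c⁻¹ * (c * r ^ d) := by gcongr; exact (measure_mono hsub).trans (h x r)
    _ ≤ r ^ d := by rw [← mul_assoc]; exact mul_le_of_le_one_left' (ENNReal.inv_mul_le_one c)

theorem le_dimH_of_measure_closedEBall_le {d : ℝ≥0}
    (h : ∀ x (r : ℝ≥0), μ (closedEBall x r) ≤ c * r ^ (d : ℝ)) (hc : c ≠ ∞) {s : Set X}
    (hs : μ s ≠ 0) : (d : ℝ≥0∞) ≤ dimH s := by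
  refine le_dimH_of_hausdorffMeasure_ne_zero fun h0 => hs ?_
  have := (inv_smul_le_hausdorffMeasure h) s
  rw [h0, Measure.smul_apply, smul_eq_mul, nonpos_iff_eq_zero, mul_eq_zero] at this
  exact this.resolve_left (ENNReal.inv_ne_zero.2 hc)

theorem hausdorffMeasure_lt_top_of_coveringNumber_mul_le {A : Set X} {d : ℝ≥0} {C : ℝ≥0∞}
    (hC : C ≠ ∞)
    (h : ∀ ε : ℝ≥0, 0 < ε → ε ≤ 1 → (coveringNumber ε A : ℝ≥0∞) * ε ^ (d : ℝ) ≤ C) :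
    μH[d] A < ∞ := by
  have hfin : ∀ ε : ℝ≥0, 0 < ε → ε ≤ 1 → coveringNumber ε A ≠ ⊤ := by
    intro ε hε hε₁ htop
    have := h ε hε hε₁
    rw [htop, ENat.toENNReal_top, ENNReal.top_mul (by positivity)] at this
    exact hC (top_le_iff.1 this)
  have : ∀ ε : ℝ≥0, Countable (minimalCover ε A) := fun ε =>
    finite_minimalCover.countable.to_subtype
  have hsmall : ∀ᶠ ε in 𝓝[>] (0 : ℝ≥0), ε ∈ Ioc 0 1 := Ioc_mem_nhdsGT zero_lt_one
  calc μH[d] A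
      ≤ liminf (fun ε : ℝ≥0 => ∑' y : minimalCover ε A, ediam (closedEBall (y : X) ε) ^ (d : ℝ))
          (𝓝[>] 0) := by
        refine Measure.hausdorffMeasure_le_liminf_tsum _ _ (fun ε : ℝ≥0 => 2 * (ε : ℝ≥0∞)) ?_ _
          (.of_forall fun _ _ => ediam_closedEBall_le) ?_
        · simpa [Function.comp_def] using ((ENNReal.continuous_const_mul ENNReal.ofNat_ne_top).comp
            ENNReal.continuous_coe).tendsto 0 |>.mono_left nhdsWithin_le_nhds
        · filter_upwards [hsmall] with ε hε
          simpa [← isCover_iff_subset_iUnion_closedEBall, iUnion_subtype]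
            using isCover_minimalCover (hfin ε hε.1 hε.2)
    _ ≤ 2 ^ (d : ℝ) * C := by
        refine liminf_le_of_frequently_le' (hsmall.mono fun ε hε => ?_).frequently
        calc ∑' y : minimalCover ε A, ediam (closedEBall (y : X) ε) ^ (d : ℝ)
            ≤ ∑' _ : minimalCover ε A, (2 * (ε : ℝ≥0∞)) ^ (d : ℝ) :=
              ENNReal.tsum_le_tsum fun _ => by gcongr; exact ediam_closedEBall_le
          _ = 2 ^ (d : ℝ) * ((coveringNumber ε A : ℝ≥0∞) * ε ^ (d : ℝ)) := by
              rw [ENNReal.tsum_set_const, encard_minimalCover (hfin ε hε.1 hε.2),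
                ENNReal.mul_rpow_of_nonneg 2 (ε : ℝ≥0∞) d.coe_nonneg]
              ring
          _ ≤ 2 ^ (d : ℝ) * C := by gcongr; exact h ε hε.1 hε.2
    _ < ∞ := ENNReal.mul_lt_top (ENNReal.rpow_lt_top_of_nonneg d.coe_nonneg (by simp)) hC.lt_top

theorem hausdorffMeasure_closedEBall_lt_top_of_le_measure_closedEBall {d : ℝ≥0}
    (h : ∀ x (r : ℝ≥0), c * r ^ (d : ℝ) ≤ μ (closedEBall x r)) (hc : c ≠ 0) (x₀ : X) (R : ℝ≥0)
    (hR : μ (closedEBall x₀ (R + 1 : ℝ≥0)) ≠ ∞) : μH[d] (closedEBall x₀ R) < ∞ := by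
  set V := μ (closedEBall x₀ (R + 1 : ℝ≥0))
  refine hausdorffMeasure_lt_top_of_coveringNumber_mul_le (C := 2 ^ (d : ℝ) * (V / c))
    (ENNReal.mul_ne_top (ENNReal.rpow_ne_top_of_nonneg d.coe_nonneg (by simp))
      (ENNReal.div_ne_top hR hc)) fun ε hε hε₁ => ?_
  obtain ⟨δ, rfl⟩ : ∃ δ, ε = 2 * δ := ⟨ε / 2, (mul_div_cancel₀ ε two_ne_zero).symm⟩
  have hδ : (δ : ℝ≥0∞) ≤ 1 := by
    have : (δ : ℝ≥0∞) ≤ 2 * δ := le_mul_of_one_le_left' one_le_two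
    exact this.trans (by exact_mod_cast hε₁)
  have hsub : ⋃ x ∈ closedEBall x₀ R, closedEBall x δ ⊆ closedEBall x₀ (R + 1 : ℝ≥0) :=
    iUnion₂_subset fun x hx y hy => calc
      edist y x₀ ≤ edist y x + edist x x₀ := edist_triangle _ _ _
      _ ≤ 1 + R := add_le_add (le_trans hy hδ) hx
      _ = ((R + 1 : ℝ≥0) : ℝ≥0∞) := by push_cast; ring
  have hcount : (coveringNumber (2 * δ) (closedEBall x₀ R) : ℝ≥0∞) * δ ^ (d : ℝ) ≤ V / c := by
    rw [ENNReal.le_div_iff_mul_le (Or.inl hc) (Or.inr hR), mul_assoc, mul_comm _ c]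
    calc (coveringNumber (2 * δ) (closedEBall x₀ R) : ℝ≥0∞) * (c * δ ^ (d : ℝ))
        ≤ packingNumber (2 * δ) (closedEBall x₀ R) * (c * δ ^ (d : ℝ)) := by
          gcongr; exact_mod_cast coveringNumber_le_packingNumber _ _
      _ ≤ μ (⋃ x ∈ closedEBall x₀ R, closedEBall x δ) :=
          packingNumber_two_mul_mul_le_measure_biUnion fun x _ => h x δ
      _ ≤ V := measure_mono hsub
  calc (coveringNumber (2 * δ) (closedEBall x₀ R) : ℝ≥0∞) * ((2 * δ : ℝ≥0) : ℝ≥0∞) ^ (d : ℝ)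
      = 2 ^ (d : ℝ) * ((coveringNumber (2 * δ) (closedEBall x₀ R) : ℝ≥0∞) * δ ^ (d : ℝ)) := by
        rw [ENNReal.coe_mul, ENNReal.mul_rpow_of_nonneg _ _ d.coe_nonneg]
        push_cast
        ring
    _ ≤ 2 ^ (d : ℝ) * (V / c) := by gcongr

end AhlforsRegular

theorem dimH_univ_eq_of_measure_closedBall_eq {X : Type*} [MetricSpace X] [MeasurableSpace X]
    [BorelSpace X] [Nonempty X] {μ : Measure X} {c : ℝ≥0∞} {d : ℝ≥0}
    (h : ∀ x (r : ℝ≥0), μ (closedBall x r) = c * r ^ (d : ℝ)) (hc₀ : c ≠ 0) (hc : c ≠ ∞) :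
    dimH (univ : Set X) = d := by
  have h' : ∀ x (r : ℝ≥0), μ (closedEBall x r) = c * r ^ (d : ℝ) := by simpa using h
  obtain ⟨x⟩ := ‹Nonempty X›
  apply le_antisymm
  · rw [← iUnion_closedBall_nat x, dimH_iUnion]
    refine iSup_le fun n => dimH_le_of_hausdorffMeasure_ne_top ?_
    have := hausdorffMeasure_closedEBall_lt_top_of_le_measure_closedEBall (fun x r => (h' x r).ge)
      hc₀ x n (by rw [h']; exact ENNReal.mul_ne_top hc (by simp)) |>.ne
    rwa [closedEBall_coe, NNReal.coe_natCast] at this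
  · refine le_dimH_of_measure_closedEBall_le (fun x r => (h' x r).le) hc fun h0 => hc₀ ?_
    have := measure_mono_null (subset_univ (closedEBall x (1 : ℝ≥0))) h0
    rwa [h', ENNReal.coe_one, ENNReal.one_rpow, mul_one] at this

namespace ParSpace

variable {N : ℕ}

theorem dist_def (p q : ParSpace N) : dist p q = max ‖p.1 - q.1‖ √|p.2 - q.2| := rfl

def ofProd : EuclideanSpace ℝ (Fin N) × ℝ → ParSpace N := id

theorem continuous_ofProd : Continuous (ofProd (N := N)) :=
  continuous_iff_continuousAt.2 fun a => tendsto_iff_dist_tendsto_zero.2 <| by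
    have : Continuous fun p : EuclideanSpace ℝ (Fin N) × ℝ => max ‖p.1 - a.1‖ √|p.2 - a.2| := by
      fun_prop
    simp_rw [dist_def]
    simpa only [ofProd, id_eq, sub_self, norm_zero, abs_zero, Real.sqrt_zero, max_self]
      using this.tendsto a

noncomputable instance : MeasureSpace (ParSpace N) where
  volume := volume.map ofProd

theorem ofProd_preimage_closedBall (p : ParSpace N) {r : ℝ} (hr : 0 ≤ r) :
    ofProd ⁻¹' closedBall p r = closedBall p.1 r ×ˢ Icc (p.2 - r ^ 2) (p.2 + r ^ 2) := by
  ext q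
  rw [mem_preimage, mem_closedBall, dist_def, max_le_iff, Real.sqrt_le_left hr, abs_sub_le_iff,
    mem_prod, mem_closedBall, dist_eq_norm, mem_Icc]
  dsimp only [ofProd, id]
  exact and_congr_right' ⟨fun h => ⟨by linarith [h.2], by linarith [h.1]⟩,
    fun h => ⟨by linarith [h.2], by linarith [h.1]⟩⟩

theorem volume_closedBall (p : ParSpace N) (r : ℝ≥0) :
    volume (closedBall p r) = 2 * volume (ball (0 : EuclideanSpace ℝ (Fin N)) 1) * r ^ (N + 2) := by
  rw [show (volume : Measure (ParSpace N)) = volume.map ofProd from rfl,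
    Measure.map_apply continuous_ofProd.measurable measurableSet_closedBall,
    ofProd_preimage_closedBall p r.coe_nonneg, Measure.volume_eq_prod, Measure.prod_prod,
    Measure.addHaar_closedBall _ _ r.coe_nonneg, finrank_euclideanSpace_fin, Real.volume_Icc,
    show p.2 + r ^ 2 - (p.2 - r ^ 2) = ((2 * r ^ 2 : ℝ≥0) : ℝ) by push_cast; ring,
    ← NNReal.coe_pow, ENNReal.ofReal_coe_nnreal, ENNReal.ofReal_coe_nnreal]
  push_cast
  ring

end ParSpace

theorem parabolic_dimH_univ_general (N : ℕ) :
    dimH (Set.univ : Set (ParSpace N)) = (N : ℝ≥0∞) + 2 := by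
  have : Nonempty (ParSpace N) := ⟨ParSpace.origin N⟩
  have hball := measure_ball_pos volume (0 : EuclideanSpace ℝ (Fin N)) one_pos
  have h := dimH_univ_eq_of_measure_closedBall_eq (d := ((N + 2 : ℕ) : ℝ≥0))
    (fun p r => by rw [ParSpace.volume_closedBall, NNReal.coe_natCast, ENNReal.rpow_natCast])
    (mul_ne_zero two_ne_zero hball.ne') (ENNReal.mul_ne_top (by simp) measure_ball_lt_top.ne)
  simpa using h

/-- The Hausdorff dimension of spacetime `ℝ^N × ℝ` with the parabolic metric is `N + 2`. -/
theorem parabolic_dimH_univ (N : ℕ) (hN : 1 ≤ N) :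
    dimH (Set.univ : Set (ParSpace N)) = (N : ℝ≥0∞) + 2 :=
  parabolic_dimH_univ_general N
end

section
/- (Two-point cone-splitting for measures.) Let μ be a Borel measure on ℝ^N, let n ≥ 0 be a real number, and let y ∈ ℝ^N with y ≠ 0. Suppose μ is homogeneous of degree n about 0 and also homogeneous of degree n about y. Then μ is invariant under translation by t·y for every t ∈ ℝ. -/
/-!
The dilation by `λ` about `p` followed by the dilation by `λ⁻¹` about `q` is the translation by
`(1 - λ⁻¹) • (q - p)`, and for a measure homogeneous of degree `n` about both points the two
scaling factors `λ ^ n` and `λ⁻¹ ^ n` cancel. As `λ` runs over `(0, ∞)` this gives invariance under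
`s • (q - p)` for every `s < 1`; exchanging the roles of `p` and `q` covers every `s > -1`.
-/

open MeasureTheory

/-- `μ` is homogeneous of degree `n` about the point `y`:
`μ(y + λ(A − y)) = λ^n μ(A)` for every Borel set `A` and every `λ > 0`. -/
def HomogeneousAbout {N : ℕ} (μ : Measure (EuclideanSpace ℝ (Fin N))) (n : ℝ)
    (y : EuclideanSpace ℝ (Fin N)) : Prop :=
  ∀ A : Set (EuclideanSpace ℝ (Fin N)), MeasurableSet A → ∀ l : ℝ, 0 < l →
    μ ((fun x => y + l • (x - y)) '' A) = ENNReal.ofReal (l ^ n) * μ A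

/-- `μ` is invariant under translation by the vector `w`. -/
def TranslationInvariantBy {N : ℕ} (μ : Measure (EuclideanSpace ℝ (Fin N)))
    (w : EuclideanSpace ℝ (Fin N)) : Prop :=
  ∀ A : Set (EuclideanSpace ℝ (Fin N)), MeasurableSet A → μ ((fun x => x + w) '' A) = μ A

section Dilation

variable {E : Type*} [AddCommGroup E] [Module ℝ E]

lemma image_dilation_eq_preimage (p : E) {l : ℝ} (hl : l ≠ 0) (A : Set E) :
    (fun x => p + l • (x - p)) '' A = (fun x => p + l⁻¹ • (x - p)) ⁻¹' A :=
  congrFun (Set.image_eq_preimage_of_inverse (fun x => by simp [smul_smul, hl])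
    (fun x => by simp [smul_smul, hl])) A

lemma dilation_comp_dilation (p q : E) {l : ℝ} (hl : l ≠ 0) :
    (fun x => q + l⁻¹ • (x - q)) ∘ (fun x => p + l • (x - p)) =
      fun x => x + (1 - l⁻¹) • (q - p) := by
  funext x
  rw [Function.comp_apply, add_sub_right_comm, smul_add, smul_smul, inv_mul_cancel₀ hl, one_smul]
  module

lemma MeasurableSet.image_dilation [TopologicalSpace E] [IsTopologicalAddGroup E]
    [ContinuousSMul ℝ E] [MeasurableSpace E] [BorelSpace E] {A : Set E} (hA : MeasurableSet A)
    (p : E) {l : ℝ} (hl : l ≠ 0) : MeasurableSet ((fun x => p + l • (x - p)) '' A) := by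
  rw [image_dilation_eq_preimage p hl]
  exact hA.preimage (by fun_prop)

end Dilation

variable {N : ℕ} {μ : Measure (EuclideanSpace ℝ (Fin N))} {n : ℝ}
  {p q : EuclideanSpace ℝ (Fin N)}

theorem HomogeneousAbout.translationInvariantBy_one_sub_inv_smul (hp : HomogeneousAbout μ n p)
    (hq : HomogeneousAbout μ n q) {l : ℝ} (hl : 0 < l) :
    TranslationInvariantBy μ ((1 - l⁻¹) • (q - p)) := by
  intro A hA
  calc μ ((fun x => x + (1 - l⁻¹) • (q - p)) '' A)
      = μ ((fun x => q + l⁻¹ • (x - q)) '' ((fun x => p + l • (x - p)) '' A)) := by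
        rw [Set.image_image, ← dilation_comp_dilation p q hl.ne']
        rfl
    _ = ENNReal.ofReal (l⁻¹ ^ n) * (ENNReal.ofReal (l ^ n) * μ A) := by
        rw [hq _ (hA.image_dilation p hl.ne') _ (inv_pos.2 hl), hp A hA l hl]
    _ = μ A := by
        rw [← mul_assoc, ← ENNReal.ofReal_mul (by positivity), ← Real.mul_rpow (by positivity)
          hl.le, inv_mul_cancel₀ hl.ne', Real.one_rpow, ENNReal.ofReal_one, one_mul]

theorem HomogeneousAbout.translationInvariantBy_smul_sub (hp : HomogeneousAbout μ n p)
    (hq : HomogeneousAbout μ n q) {s : ℝ} (hs : s < 1) :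
    TranslationInvariantBy μ (s • (q - p)) := by
  have h := hp.translationInvariantBy_one_sub_inv_smul hq (inv_pos.2 (sub_pos.2 hs))
  rwa [inv_inv, sub_sub_cancel] at h

theorem two_point_cone_splitting_general (N : ℕ) (μ : Measure (EuclideanSpace ℝ (Fin N)))
    (n : ℝ) (y : EuclideanSpace ℝ (Fin N))
    (h0 : HomogeneousAbout μ n 0) (hy' : HomogeneousAbout μ n y) :
    ∀ t : ℝ, TranslationInvariantBy μ (t • y) := by
  intro t
  rcases lt_or_ge t 1 with ht | ht
  · simpa using h0.translationInvariantBy_smul_sub hy' ht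
  · simpa using hy'.translationInvariantBy_smul_sub h0 (s := -t) (by linarith)

/-- Two-point cone-splitting: a Borel measure on `ℝ^N` that is homogeneous of
degree `n` about `0` and about a second point `y ≠ 0` is invariant under all
translations along the line `ℝ·y`. -/
theorem two_point_cone_splitting (N : ℕ) (μ : Measure (EuclideanSpace ℝ (Fin N)))
    (n : ℝ) (hn : 0 ≤ n) (y : EuclideanSpace ℝ (Fin N)) (hy : y ≠ 0)
    (h0 : HomogeneousAbout μ n 0) (hy' : HomogeneousAbout μ n y) :
    ∀ t : ℝ, TranslationInvariantBy μ (t • y) :=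
  two_point_cone_splitting_general N μ n y h0 hy'
end
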